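/- arXiv:1604.01760 — 6 statements merged into one kernel-verified Lean document; each statement's English description precedes it below -/
import Mathlib

section
/- Let p be a natural number with p > 4. Then p is prime if and only if (p-4)! ≡ (-1)^(⌊p/3⌋+1) · ⌊(p+1)/6⌋ (mod p). -/
lemma aux_mul_dvd_factorial {a b n : ℕ} (ha : 0 < a) (hab : a < b) (hbn : b ≤ n) :
    a * b ∣ n.factorial := by
  have h1 : a * b ∣ b.factorial := by
    have hfac : b.factorial = b * (b - 1).factorial := by
      conv_lhs => rw [show b = (b - 1) + 1 by omega]
      rw [Nat.factorial_succ]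
      congr 1
      omega
    rw [hfac, mul_comm a b]
    exact Nat.mul_dvd_mul_left b (Nat.dvd_factorial ha (by omega))
  exact h1.trans (Nat.factorial_dvd_factorial hbn)

lemma aux_dvd_factorial_sub_four {p : ℕ} (hp : 4 < p) (hnp : ¬ p.Prime)
    (h6 : p ≠ 6) (h9 : p ≠ 9) : p ∣ (p - 4).factorial := by
  have hq : p.minFac.Prime := Nat.minFac_prime (by omega)
  obtain ⟨b, hb⟩ := p.minFac_dvd
  have hb0 : b ≠ 0 := by rintro rfl; omega
  have hb1 : b ≠ 1 := by
    rintro rfl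
    rw [mul_one] at hb
    exact hnp (hb ▸ hq)
  have hqb : p.minFac ≤ b := Nat.minFac_le_of_dvd (by omega) (Dvd.intro_left p.minFac hb.symm)
  generalize hgen : p.minFac = q at hq hb hqb
  have hq2 : 2 ≤ q := hq.two_le
  rcases lt_or_eq_of_le hqb with hlt | heq
  · -- q < b
    have hble : b ≤ p - 4 := by
      rcases Nat.lt_or_ge q 3 with hq3 | hq3
      · have hq2' : q = 2 := by omega
        rw [hq2'] at hb
        omega
      · have h3b : 3 * b ≤ q * b := Nat.mul_le_mul_right b hq3
        omega
    have := aux_mul_dvd_factorial (show 0 < q by omega) hlt hble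
    rwa [← hb] at this
  · -- p = q * q
    subst heq
    have hq5 : 5 ≤ q := by
      by_contra hcon
      push_neg at hcon
      interval_cases q
      · omega
      · omega
      · exact absurd hq (by norm_num)
    have h5q : 5 * q ≤ q * q := Nat.mul_le_mul_right q hq5
    have h2q : 2 * q ≤ p - 4 := by omega
    have hdvd : q * (2 * q) ∣ (p - 4).factorial :=
      aux_mul_dvd_factorial (by omega) (by omega) h2q
    exact (Dvd.intro 2 (by rw [hb]; ring)).trans hdvd

theorem primality_criterion_pm4 (p : ℕ) (hp : 4 < p) :
    p.Prime ↔
      (Nat.factorial (p - 4) : ℤ) ≡ (-1) ^ (p / 3 + 1) * (((p + 1) / 6 : ℕ) : ℤ) [ZMOD (p : ℤ)] := by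
  haveI : NeZero p := ⟨by omega⟩
  rw [← ZMod.intCast_eq_intCast_iff]
  simp only [Int.cast_mul, Int.cast_pow, Int.cast_neg, Int.cast_one, Int.cast_natCast]
  constructor
  · intro hprime
    haveI : Fact p.Prime := ⟨hprime⟩
    have hw : ((p - 1).factorial : ZMod p) = -1 := ZMod.wilsons_lemma p
    have hfac : (p - 1).factorial =
        (p - 1) * ((p - 2) * ((p - 3) * (p - 4).factorial)) := by
      have e1 : p - 1 = (p - 2) + 1 := by omega
      have e2 : p - 2 = (p - 3) + 1 := by omega
      have e3 : p - 3 = (p - 4) + 1 := by omega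
      rw [e1, e2, e3, Nat.factorial_succ, Nat.factorial_succ, Nat.factorial_succ]
    have hc1 : ((p - 1 : ℕ) : ZMod p) = -1 := by
      have : ((p - 1 : ℕ) : ZMod p) = (p : ZMod p) - 1 := by
        push_cast [Nat.cast_sub (by omega : 1 ≤ p)]; ring
      rw [this, ZMod.natCast_self]; ring
    have hc2 : ((p - 2 : ℕ) : ZMod p) = -2 := by
      have : ((p - 2 : ℕ) : ZMod p) = (p : ZMod p) - 2 := by
        push_cast [Nat.cast_sub (by omega : 2 ≤ p)]; ring
      rw [this, ZMod.natCast_self]; ring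
    have hc3 : ((p - 3 : ℕ) : ZMod p) = -3 := by
      have : ((p - 3 : ℕ) : ZMod p) = (p : ZMod p) - 3 := by
        push_cast [Nat.cast_sub (by omega : 3 ≤ p)]; ring
      rw [this, ZMod.natCast_self]; ring
    have key : (6 : ZMod p) * ((p - 4).factorial : ZMod p) = 1 := by
      have hw' := hw
      rw [hfac] at hw'
      push_cast at hw'
      rw [hc1, hc2, hc3] at hw'
      linear_combination -hw'
    have h6ne : (6 : ZMod p) ≠ 0 := by
      intro h
      have hdvd : p ∣ 6 := by
        have := (ZMod.natCast_eq_zero_iff 6 p).mp (by exact_mod_cast h)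
        exact this
      have hle : p ≤ 6 := Nat.le_of_dvd (by norm_num) hdvd
      interval_cases p
      · omega
      · exact absurd hprime (by norm_num)
    have h2 : ¬ (2 ∣ p) := by
      intro h
      rcases (Nat.Prime.eq_one_or_self_of_dvd hprime 2 h) with h' | h' <;> omega
    have h3 : ¬ (3 ∣ p) := by
      intro h
      rcases (Nat.Prime.eq_one_or_self_of_dvd hprime 3 h) with h' | h' <;> omega
    have hmod : p % 6 = 1 ∨ p % 6 = 5 := by omega
    set k := p / 6 with hk
    have hrhs : (6 : ZMod p) *
        ((-1 : ZMod p) ^ (p / 3 + 1) * (((p + 1) / 6 : ℕ) : ZMod p)) = 1 := by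
      rcases hmod with h1 | h5
      · have hp3 : p / 3 + 1 = 2 * k + 1 := by omega
        have hm : (p + 1) / 6 = k := by omega
        have hsign : (-1 : ZMod p) ^ (2 * k + 1) = -1 :=
          Odd.neg_one_pow ⟨k, by ring⟩
        rw [hp3, hm, hsign]
        have h6k : ((6 * k : ℕ) : ZMod p) = -1 := by
          have he : (6 * k : ℕ) = p - 1 := by omega
          rw [he]; exact hc1
        push_cast at h6k ⊢
        linear_combination -h6k
      · have hp3 : p / 3 + 1 = 2 * k + 2 := by omega
        have hm : (p + 1) / 6 = k + 1 := by omega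
        have hsign : (-1 : ZMod p) ^ (2 * k + 2) = 1 :=
          Even.neg_one_pow ⟨k + 1, by ring⟩
        rw [hp3, hm, hsign]
        have h6k : ((6 * k + 6 : ℕ) : ZMod p) = 1 := by
          have he : (6 * k + 6 : ℕ) = p + 1 := by omega
          rw [he]; push_cast [ZMod.natCast_self]; ring
        push_cast at h6k ⊢
        linear_combination h6k
    exact mul_left_cancel₀ h6ne (key.trans hrhs.symm)
  · intro h
    by_contra hnp
    rcases eq_or_ne p 6 with rfl | h6
    · revert h; decide
    rcases eq_or_ne p 9 with rfl | h9
    · revert h; decide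
    have hdvd : p ∣ (p - 4).factorial := aux_dvd_factorial_sub_four hp hnp h6 h9
    have hz : (((p - 4).factorial : ℕ) : ZMod p) = 0 :=
      (ZMod.natCast_eq_zero_iff _ p).mpr hdvd
    rw [hz] at h
    have hunit : IsUnit ((-1 : ZMod p) ^ (p / 3 + 1)) := (isUnit_one.neg).pow _
    have hm0 : (((p + 1) / 6 : ℕ) : ZMod p) = 0 := by
      rcases hunit.exists_left_inv with ⟨u, hu⟩
      have h' := congrArg (u * ·) h
      rw [← mul_assoc, hu, one_mul] at h'
      simpa using h'.symm
    have hpm : p ∣ (p + 1) / 6 := (ZMod.natCast_eq_zero_iff _ p).mp hm0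
    exact absurd (Nat.le_of_dvd (by omega) hpm) (by omega)
end

section
/- Define the Smarandache function η(n) as the least positive integer m such that n divides m!. Then for every integer p > 4, p is prime if and only if η(p) = p. -/
/-- The Smarandache function: the least positive integer `m` such that `n ∣ m!`. -/
noncomputable def smarandache (n : ℕ) : ℕ := sInf {m | 0 < m ∧ n ∣ Nat.factorial m}

lemma mul_dvd_factorial_of_lt {a b N : ℕ} (ha : 0 < a) (hab : a < b) (hbN : b ≤ N) :
    a * b ∣ Nat.factorial N := by
  have h1 : a ∣ Nat.factorial (b - 1) :=
    Nat.dvd_factorial ha (Nat.le_sub_one_of_lt hab)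
  have h2 : a * b ∣ Nat.factorial (b - 1) * b := mul_dvd_mul h1 dvd_rfl
  have hb : 0 < b := ha.trans hab
  have h3 : Nat.factorial (b - 1) * b = Nat.factorial b := by
    rcases Nat.exists_eq_succ_of_ne_zero hb.ne' with ⟨c, rfl⟩
    simp [Nat.factorial_succ, Nat.mul_comm]
  exact (h2.trans (h3 ▸ dvd_rfl)).trans (Nat.factorial_dvd_factorial hbN)

lemma composite_dvd_factorial_pred {n : ℕ} (hn : 4 < n) (h : ¬ n.Prime) :
    n ∣ Nat.factorial (n - 1) := by
  obtain ⟨m, hm1, hm2, hm3⟩ := Nat.exists_dvd_of_not_prime2 (by omega) h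
  obtain ⟨k, rfl⟩ := hm1
  have hk1 : 1 < k := by
    by_contra hk
    interval_cases k <;> omega
  rcases lt_trichotomy m k with hlt | rfl | hlt
  · have h2k : 2 * k ≤ m * k := Nat.mul_le_mul_right k hm2
    exact mul_dvd_factorial_of_lt (by omega) hlt (by omega)
  · -- n = m * m, m ≥ 3
    have hm3' : 3 ≤ m := by nlinarith
    have : m * m ∣ m * (2 * m) := ⟨2, by ring⟩
    have h3m : 3 * m ≤ m * m := Nat.mul_le_mul_right m hm3'
    exact this.trans (mul_dvd_factorial_of_lt (by omega) (by omega) (by omega))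
  · have : m * k = k * m := Nat.mul_comm m k
    rw [this]
    have h2m : 2 * m ≤ k * m := Nat.mul_le_mul_right m hk1
    exact mul_dvd_factorial_of_lt (by omega) hlt (by omega)

theorem prime_iff_smarandache_fixed_point (p : ℕ) (hp : 4 < p) :
    p.Prime ↔ smarandache p = p := by
  unfold smarandache
  constructor
  · intro hpp
    have hmem : p ∈ {m | 0 < m ∧ p ∣ Nat.factorial m} :=
      ⟨hpp.pos, Nat.dvd_factorial hpp.pos le_rfl⟩
    have h1 : sInf {m | 0 < m ∧ p ∣ Nat.factorial m} ≤ p := Nat.sInf_le hmem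
    have h2 := Nat.sInf_mem (⟨p, hmem⟩ : Set.Nonempty {m | 0 < m ∧ p ∣ Nat.factorial m})
    have h3 : p ≤ sInf {m | 0 < m ∧ p ∣ Nat.factorial m} :=
      (Nat.Prime.dvd_factorial hpp).mp h2.2
    omega
  · intro heq
    by_contra h
    have hdvd := composite_dvd_factorial_pred hp h
    have : sInf {m | 0 < m ∧ p ∣ Nat.factorial m} ≤ p - 1 :=
      Nat.sInf_le ⟨by omega, hdvd⟩
    omega
end

section
/- Let η be the Smarandache function (η(n) is the least m with n ∣ m!). For any integer n ≥ 4, the number of primes at most n equals -1 + ∑_{k=2}^{n} ⌊η(k)/k⌋. -/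
lemma smarandache_le {n m : ℕ} (hm : 0 < m) (h : n ∣ Nat.factorial m) :
    smarandache n ≤ m :=
  Nat.sInf_le ⟨hm, h⟩

lemma smarandache_prime {p : ℕ} (hp : p.Prime) : smarandache p = p := by
  have hset : {m | 0 < m ∧ p ∣ Nat.factorial m} = {m | p ≤ m} := by
    ext m
    simp only [Set.mem_setOf_eq, Nat.Prime.dvd_factorial hp]
    exact ⟨fun h => h.2, fun h => ⟨lt_of_lt_of_le hp.pos h, h⟩⟩
  rw [smarandache, hset]
  apply le_antisymm
  · exact Nat.sInf_le (by simp)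
  · exact le_csInf ⟨p, by simp⟩ fun m hm => hm

lemma smarandache_four : smarandache 4 = 4 := by
  apply le_antisymm
  · exact smarandache_le (by norm_num) (by decide)
  · by_contra h
    push_neg at h
    interval_cases h' : smarandache 4
    all_goals {
      have := Nat.sInf_mem (⟨4, by norm_num, by decide⟩ :
        Set.Nonempty {m | 0 < m ∧ 4 ∣ Nat.factorial m})
      rw [show smarandache 4 = sInf {m | 0 < m ∧ 4 ∣ Nat.factorial m} from rfl] at h'
      rw [h'] at this
      revert this
      decide }

lemma composite_dvd_factorial_pred_s6 {k : ℕ} (hk : 2 ≤ k) (hnp : ¬ k.Prime) (h4 : k ≠ 4) :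
    k ∣ Nat.factorial (k - 1) := by
  obtain ⟨a, ha, ha2, halt⟩ := Nat.exists_dvd_of_not_prime2 hk hnp
  obtain ⟨b, hb⟩ := ha
  have hb2 : 2 ≤ b := by
    rcases b with _ | _ | b
    · omega
    · omega
    · omega
  have hblt : b < k := by
    nlinarith
  have hfact : ∀ s : Finset ℕ, s ⊆ Finset.Icc 1 (k - 1) → (∏ x ∈ s, x) ∣ Nat.factorial (k - 1) := by
    intro s hs
    have : (∏ x ∈ s, x) ∣ ∏ x ∈ Finset.Icc 1 (k - 1), x :=
      Finset.prod_dvd_prod_of_subset s _ id hs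
    rwa [show Finset.Icc 1 (k-1) = Finset.Ico 1 ((k-1)+1) from (Finset.Ico_add_one_right_eq_Icc 1 (k-1)).symm,
      Finset.prod_Ico_id_eq_factorial] at this
  by_cases hab : a = b
  · -- k = a^2, a ≥ 3
    subst hab
    have ha3 : 3 ≤ a := by
      rcases Nat.lt_or_ge a 3 with h | h
      · interval_cases a <;> omega
      · exact h
    have h2a : 2 * a ≤ k - 1 := by
      have : 2 * a + 1 ≤ k := by nlinarith
      omega
    have hane : a ≠ 2 * a := by omega
    have hdvd := hfact {a, 2 * a} (by
      intro x hx
      simp only [Finset.mem_insert, Finset.mem_singleton] at hx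
      rcases hx with rfl | rfl <;> simp [Finset.mem_Icc] <;> omega)
    rw [Finset.prod_insert (by simpa using hane), Finset.prod_singleton] at hdvd
    exact dvd_trans ⟨2, by rw [hb]; ring⟩ hdvd
  · have hdvd := hfact {a, b} (by
      intro x hx
      simp only [Finset.mem_insert, Finset.mem_singleton] at hx
      rcases hx with rfl | rfl <;> simp [Finset.mem_Icc] <;> omega)
    rw [Finset.prod_insert (by simpa using hab), Finset.prod_singleton] at hdvd
    exact hb ▸ hdvd

lemma smarandache_div (k : ℕ) (hk : 2 ≤ k) :
    smarandache k / k = if k.Prime ∨ k = 4 then 1 else 0 := by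
  split_ifs with h
  · rcases h with h | rfl
    · rw [smarandache_prime h, Nat.div_self (by omega)]
    · rw [smarandache_four]
  · push_neg at h
    have hlt : smarandache k < k := by
      have := smarandache_le (n := k) (m := k - 1) (by omega)
        (composite_dvd_factorial_pred_s6 hk h.1 h.2)
      omega
    exact Nat.div_eq_of_lt hlt

theorem primeCounting_eq_sum_smarandache (n : ℕ) (hn : 4 ≤ n) :
    (Nat.primeCounting n : ℤ) =
      -1 + ∑ k ∈ Finset.Icc 2 n, ((smarandache k / k : ℕ) : ℤ) := by
  have hsum : ∑ k ∈ Finset.Icc 2 n, ((smarandache k / k : ℕ) : ℤ) =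
      ∑ k ∈ Finset.Icc 2 n, ((if k.Prime then (1:ℤ) else 0) + (if k = 4 then (1:ℤ) else 0)) := by
    apply Finset.sum_congr rfl
    intro k hk
    rw [Finset.mem_Icc] at hk
    rw [smarandache_div k hk.1]
    by_cases hp : k.Prime
    · have : k ≠ 4 := fun h => by subst h; exact (by decide : ¬ Nat.Prime 4) hp
      simp [hp, this]
    · by_cases h4 : k = 4 <;> simp [hp, h4] <;> decide
  rw [hsum, Finset.sum_add_distrib]
  have h4 : ∑ k ∈ Finset.Icc 2 n, (if k = 4 then (1:ℤ) else 0) = 1 := by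
    rw [Finset.sum_ite_eq' (Finset.Icc 2 n) 4 (fun _ => (1:ℤ))]
    simp [Finset.mem_Icc, hn]
  have hp : ∑ k ∈ Finset.Icc 2 n, (if k.Prime then (1:ℤ) else 0) = (Nat.primeCounting n : ℤ) := by
    have hfil : ({k ∈ Finset.Icc 2 n | Nat.Prime k}) = {x ∈ Finset.range (n+1) | Nat.Prime x} := by
      ext k
      simp only [Finset.mem_filter, Finset.mem_Icc, Finset.mem_range]
      constructor
      · rintro ⟨⟨h2, hkn⟩, hpk⟩
        exact ⟨by omega, hpk⟩
      · rintro ⟨hkn, hpk⟩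
        exact ⟨⟨hpk.two_le, by omega⟩, hpk⟩
    rw [Finset.sum_boole, hfil, Nat.primeCounting, Nat.primeCounting',
      Nat.count_eq_card_filter_range]
  rw [h4, hp]
  ring
end

section
/- If p is a prime and α is a positive integer with α ≤ p, then η(p^α) = p·α, where η is the Smarandache function. -/
theorem smarandache_prime_pow (p α : ℕ) (hp : p.Prime) (hα : 0 < α) (hαp : α ≤ p) :
    smarandache (p ^ α) = p * α := by
  have hp2 := hp.two_le
  have hpα : p * α ≤ p ^ 2 := by
    rw [sq]; exact Nat.mul_le_mul_left p hαp
  have hmem : p * α ∈ {m | 0 < m ∧ p ^ α ∣ Nat.factorial m} := by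
    constructor
    · positivity
    · rw [Nat.Prime.pow_dvd_factorial_iff hp (b := 3)
        (Nat.log_lt_of_lt_pow (by positivity) (lt_of_le_of_lt hpα (by
          calc p ^ 2 < p ^ 3 := Nat.pow_lt_pow_right hp.one_lt (by norm_num))))]
      have : α ≤ p * α / p ^ 1 := by
        rw [pow_one, Nat.mul_div_cancel_left _ hp.pos]
      calc α ≤ p * α / p ^ 1 := this
        _ ≤ ∑ i ∈ Finset.Ico 1 3, p * α / p ^ i :=
          Finset.single_le_sum (f := fun i => p * α / p ^ i) (fun _ _ => Nat.zero_le _)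
            (by decide)
  apply le_antisymm (Nat.sInf_le hmem)
  apply le_csInf ⟨_, hmem⟩
  rintro m ⟨hm0, hmdvd⟩
  by_contra hlt
  push_neg at hlt
  rw [Nat.Prime.pow_dvd_factorial_iff hp (b := 3)
      (Nat.log_lt_of_lt_pow (by omega) (by
        calc m < p * α := hlt
          _ ≤ p ^ 2 := hpα
          _ < p ^ 3 := Nat.pow_lt_pow_right hp.one_lt (by norm_num)))] at hmdvd
  have h2 : m / p ^ 2 = 0 := Nat.div_eq_of_lt (lt_of_lt_of_le hlt hpα)
  have h1 : m / p ^ 1 < α := by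
    rw [pow_one]
    exact Nat.div_lt_of_lt_mul hlt
  have : ∑ i ∈ Finset.Ico 1 3, m / p ^ i = m / p ^ 1 + m / p ^ 2 := by
    rw [show (3:ℕ) = 2 + 1 from rfl, Finset.sum_Ico_succ_top (by norm_num),
      show Finset.Ico 1 2 = {1} from rfl, Finset.sum_singleton]
  omega
end

section
/- If p is a prime and α ≥ 2 is an integer, then η(p^(p^α)) = p^(α+1) - p^α + p, where η is the Smarandache function. -/
open Finset

lemma geom_aux (p : ℕ) (hp : 2 ≤ p) : ∀ n : ℕ, ∑ j ∈ range n, p ^ j * (p - 1) = p ^ n - 1 := by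
  intro n
  induction n with
  | zero => simp
  | succ n ih =>
    rw [Finset.sum_range_succ, ih, pow_succ]
    have h1 : 1 ≤ p ^ n := Nat.one_le_pow _ _ (by omega)
    have h2 : p ^ n * p = p ^ n * (p - 1) + p ^ n := by
      have : p - 1 + 1 = p := by omega
      nlinarith [this]
    omega

theorem smarandache_prime_pow_pow (p α : ℕ) (hp : p.Prime) (hα : 2 ≤ α) :
    smarandache (p ^ (p ^ α)) = p ^ (α + 1) - p ^ α + p := by
  have hp2 : 2 ≤ p := hp.two_le
  set m : ℕ := p ^ (α + 1) - p ^ α + p with hm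
  have hpα : p < p ^ α := by
    calc p = p ^ 1 := (pow_one p).symm
    _ < p ^ α := Nat.pow_lt_pow_right (by omega) (by omega)
  have hpow_lt : p ^ α < p ^ (α + 1) := Nat.pow_lt_pow_right (by omega) (by omega)
  have hmlt : m < p ^ (α + 1) := by omega
  have hmpos : 0 < m := by omega
  -- key decomposition of m for 1 ≤ i ≤ α
  have hdecomp : ∀ i ∈ Ico 1 (α + 1), m = p ^ i * (p ^ (α - i) * (p - 1)) + p := by
    intro i hi
    rw [mem_Ico] at hi
    have h1 : p ^ i * (p ^ (α - i) * (p - 1)) = p ^ α * (p - 1) := by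
      rw [← mul_assoc, ← pow_add]
      congr 2
      omega
    rw [h1, hm]
    have h2 : p ^ α * (p - 1) + p ^ α = p ^ (α + 1) := by
      have : p - 1 + 1 = p := by omega
      calc p ^ α * (p - 1) + p ^ α = p ^ α * (p - 1 + 1) := by ring
      _ = p ^ (α + 1) := by rw [this, pow_succ]
    omega
  -- floor division values
  have hdiv : ∀ i ∈ Ico 1 (α + 1), m / p ^ i
      = p ^ (α - i) * (p - 1) + p / p ^ i := by
    intro i hi
    rw [hdecomp i hi, Nat.mul_add_div (pow_pos (by omega : 0 < p) i)]
  have hdiv' : ∀ i ∈ Ico 1 (α + 1), (m - 1) / p ^ i = p ^ (α - i) * (p - 1) := by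
    intro i hi
    rw [mem_Ico] at hi
    have hd := hdecomp i (by rw [mem_Ico]; exact hi)
    have hple : p ≤ p ^ i := by
      calc p = p ^ 1 := (pow_one p).symm
      _ ≤ p ^ i := Nat.pow_le_pow_right (by omega) hi.1
    have : m - 1 = p ^ i * (p ^ (α - i) * (p - 1)) + (p - 1) := by omega
    rw [this, Nat.mul_add_div (pow_pos (by omega : 0 < p) i),
      Nat.div_eq_of_lt (by omega), Nat.add_zero]
  -- the telescoping / geometric sum
  have hsum_base : ∑ i ∈ Ico 1 (α + 1), p ^ (α - i) * (p - 1) = p ^ α - 1 := by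
    rw [Finset.sum_Ico_eq_sum_range]
    simp only [Nat.add_sub_cancel]
    rw [← Finset.sum_range_reflect]
    have : ∀ j ∈ range α, p ^ (α - (1 + (α - 1 - j))) * (p - 1) = p ^ j * (p - 1) := by
      intro j hj
      rw [mem_range] at hj
      congr 2
      omega
    rw [Finset.sum_congr rfl this, geom_aux p hp2]
  have hsum_p : ∑ i ∈ Ico 1 (α + 1), p / p ^ i = 1 := by
    rw [Finset.sum_eq_single_of_mem 1 (by rw [mem_Ico]; omega)]
    · rw [pow_one, Nat.div_self (by omega)]
    · intro i hi hne
      rw [mem_Ico] at hi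
      apply Nat.div_eq_of_lt
      calc p = p ^ 1 := (pow_one p).symm
      _ < p ^ i := Nat.pow_lt_pow_right (by omega) (by omega)
  -- Legendre sums
  have hSm : ∑ i ∈ Ico 1 (α + 1), m / p ^ i = p ^ α := by
    rw [Finset.sum_congr rfl hdiv, Finset.sum_add_distrib, hsum_base, hsum_p]
    have : 1 ≤ p ^ α := Nat.one_le_pow _ _ (by omega)
    omega
  have hSm' : ∑ i ∈ Ico 1 (α + 1), (m - 1) / p ^ i = p ^ α - 1 := by
    rw [Finset.sum_congr rfl hdiv', hsum_base]
  have hlogm : Nat.log p m < α + 1 := Nat.log_lt_of_lt_pow (by omega) hmlt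
  have hlogm' : Nat.log p (m - 1) < α + 1 :=
    lt_of_le_of_lt (Nat.log_mono_right (by omega)) hlogm
  -- m works
  have hmem : m ∈ {k | 0 < k ∧ p ^ (p ^ α) ∣ Nat.factorial k} := by
    refine ⟨hmpos, ?_⟩
    rw [Nat.Prime.pow_dvd_factorial_iff hp hlogm, hSm]
  -- m - 1 does not
  have hnot : ¬ p ^ (p ^ α) ∣ Nat.factorial (m - 1) := by
    rw [Nat.Prime.pow_dvd_factorial_iff hp hlogm', hSm']
    have : 1 ≤ p ^ α := Nat.one_le_pow _ _ (by omega)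
    omega
  apply le_antisymm
  · exact Nat.sInf_le hmem
  · by_contra h
    push_neg at h
    have hne : {k | 0 < k ∧ p ^ (p ^ α) ∣ Nat.factorial k}.Nonempty := ⟨m, hmem⟩
    obtain ⟨hpos, hdvd⟩ := Nat.sInf_mem hne
    have hle : smarandache (p ^ (p ^ α)) ≤ m - 1 := by
      unfold smarandache at h ⊢; omega
    exact hnot (hdvd.trans (Nat.factorial_dvd_factorial hle))
end

section
/- Generalization of Euler's theorem: for any integers a and m with m ≠ 0, there exist a natural number s and a positive divisor m_s of m with gcd(a, m_s) = 1 such that a^(φ(m_s) + s) ≡ a^s (mod m). -/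
theorem euler_theorem_generalization (a m : ℤ) (hm : m ≠ 0) :
    ∃ (s : ℕ) (ms : ℕ), 0 < ms ∧ (ms : ℤ) ∣ m ∧ Int.gcd a (ms : ℤ) = 1 ∧
      a ^ (Nat.totient ms + s) ≡ a ^ s [ZMOD m] := by
  rcases eq_or_ne a 0 with rfl | ha
  · exact ⟨1, 1, one_pos, one_dvd m, by simp, by simp [Nat.totient_one]⟩
  set n := m.natAbs with hn_def
  have hn : n ≠ 0 := Int.natAbs_ne_zero.mpr hm
  set b := a.natAbs with hb_def
  have hb : b ≠ 0 := Int.natAbs_ne_zero.mpr ha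
  set g := Nat.gcd (b ^ n) n with hg_def
  set ms := n / g with hms_def
  have hgn : g ∣ n := Nat.gcd_dvd_right _ _
  have hgb : g ∣ b ^ n := Nat.gcd_dvd_left _ _
  have hmsg : ms * g = n := Nat.div_mul_cancel hgn
  have hms0 : 0 < ms := Nat.pos_of_ne_zero (fun h => hn (by rw [← hmsg, h, zero_mul]))
  -- coprimality of b and ms
  have hcop : Nat.Coprime b ms := by
    by_contra hc
    obtain ⟨p, hp, hpb, hpms⟩ := Nat.Prime.not_coprime_iff_dvd.mp hc
    set e := n.factorization p with he
    have hen : e < n := Nat.factorization_lt p hn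
    have h1 : p ^ e ∣ b ^ n :=
      dvd_trans (pow_dvd_pow p hen.le) (pow_dvd_pow_of_dvd hpb n)
    have h2 : p ^ e ∣ n := Nat.ordProj_dvd n p
    have h3 : p ^ e ∣ g := Nat.dvd_gcd h1 h2
    have h4 : p ^ (e + 1) ∣ n := by
      rw [← hmsg, pow_succ, mul_comm (p ^ e) p]
      exact mul_dvd_mul hpms h3
    have := (Nat.Prime.pow_dvd_iff_le_factorization hp hn).mp h4
    omega
  have hgcd : Int.gcd a (ms : ℤ) = 1 := by
    simpa [Int.gcd, Int.natAbs_natCast] using hcop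
  refine ⟨n, ms, hms0, ?_, hgcd, ?_⟩
  · exact dvd_trans (Int.natCast_dvd_natCast.mpr (Nat.div_dvd_of_dvd hgn))
      (Int.natAbs_dvd.mpr dvd_rfl)
  -- Euler's theorem: ms ∣ a ^ φ(ms) - 1
  haveI : NeZero ms := ⟨hms0.ne'⟩
  have hunit : IsUnit ((a : ZMod ms)) := by
    obtain ⟨u, v, huv⟩ := Int.isCoprime_iff_gcd_eq_one.mpr hgcd
    refine IsUnit.of_mul_eq_one ((u : ZMod ms)) ?_
    have : ((u * a + v * ms : ℤ) : ZMod ms) = ((1 : ℤ) : ZMod ms) := by rw [huv]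
    push_cast at this
    rw [ZMod.natCast_self] at this
    rw [mul_comm]
    simpa using this
  have heuler : (ms : ℤ) ∣ a ^ Nat.totient ms - 1 := by
    rw [← ZMod.intCast_zmod_eq_zero_iff_dvd]
    push_cast
    have h := ZMod.pow_totient hunit.unit
    have h2 : ((hunit.unit : (ZMod ms)ˣ) : ZMod ms) ^ Nat.totient ms = 1 := by
      rw [← Units.val_pow_eq_pow_val, h, Units.val_one]
    rw [IsUnit.unit_spec] at h2
    rw [h2]
    ring
  have hgdvd : (g : ℤ) ∣ a ^ n := by
    apply Int.dvd_natAbs.mp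
    rw [Int.natAbs_pow]
    exact_mod_cast Int.natCast_dvd_natCast.mpr hgb
  -- combine
  have hcop2 : IsCoprime (ms : ℤ) (g : ℤ) := by
    rw [Nat.isCoprime_iff_coprime]
    exact (Nat.Coprime.pow_left n hcop).coprime_dvd_left hgb |>.symm.symm |>.symm
  have hfin : (n : ℤ) ∣ a ^ (Nat.totient ms + n) - a ^ n := by
    have heq : a ^ (Nat.totient ms + n) - a ^ n = (a ^ Nat.totient ms - 1) * a ^ n := by
      rw [pow_add]; ring
    rw [heq, show ((n : ℤ)) = (ms : ℤ) * g by exact_mod_cast hmsg.symm]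
    exact mul_dvd_mul heuler hgdvd
  have : m ∣ a ^ (Nat.totient ms + n) - a ^ n := Int.natAbs_dvd.mp hfin
  exact (Int.modEq_iff_dvd.mpr this).symm
end
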